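/- arXiv:2004.01065 — 2 statements merged into one kernel-verified Lean document; each statement's English description precedes it below -/
import Mathlib

section
/- In the Ariki–Koike algebra H(d,n), the elements (T_1 − q)·(T_0 − q·s/(q + q⁻¹))·(T_1 − q), for s ranging over k, pairwise commute; in particular the product defining τ is independent of the order of its factors. -/
open FreeAlgebra

/-- The defining relations of the Ariki–Koike algebra `H(d,n)` with parameters `q` and
`u = (u_1, …, u_d)`, viewed as relations on the free algebra on generators
`T_0, T_1, …, T_{n-1}` (indexed by `Fin n`). -/
inductive AKRel (k : Type*) [Field k] (q : k) (d n : ℕ) (u : Fin d → k) :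
    FreeAlgebra k (Fin n) → FreeAlgebra k (Fin n) → Prop
  | quad (i : Fin n) (hi : 1 ≤ (i : ℕ)) :
      AKRel k q d n u
        ((ι k i - algebraMap k (FreeAlgebra k (Fin n)) q) *
          (ι k i + algebraMap k (FreeAlgebra k (Fin n)) q⁻¹)) 0
  | cyclo (h : 0 < n) :
      AKRel k q d n u
        (((List.finRange d).map
            (fun i => ι k (⟨0, h⟩ : Fin n) - algebraMap k (FreeAlgebra k (Fin n)) (u i))).prod)
        0
  | comm (i j : Fin n) (hij : (i : ℕ) + 1 < (j : ℕ)) :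
      AKRel k q d n u (ι k i * ι k j) (ι k j * ι k i)
  | braid (i j : Fin n) (hi : 1 ≤ (i : ℕ)) (hj : (j : ℕ) = (i : ℕ) + 1) :
      AKRel k q d n u (ι k i * ι k j * ι k i) (ι k j * ι k i * ι k j)
  | bbraid (i j : Fin n) (hi : (i : ℕ) = 0) (hj : (j : ℕ) = 1) :
      AKRel k q d n u (ι k i * ι k j * ι k i * ι k j) (ι k j * ι k i * ι k j * ι k i)

/-- The Ariki–Koike algebra `H(d,n)`: the quotient of the free algebra on
`T_0, …, T_{n-1}` by the two-sided ideal (ring congruence) generated by the defining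
relations. -/
abbrev ArikiKoike (k : Type*) [Field k] (q : k) (d n : ℕ) (u : Fin d → k) : Type _ :=
  RingQuot (AKRel k q d n u)

/-- The generator `T_i` of the Ariki–Koike algebra (junk value `0` for `i ≥ n`). -/
noncomputable def AKT {k : Type*} [Field k] (q : k) (d n : ℕ) (u : Fin d → k) (i : ℕ) :
    ArikiKoike k q d n u :=
  if h : i < n then RingQuot.mkAlgHom k (AKRel k q d n u) (ι k (⟨i, h⟩ : Fin n)) else 0

/-- The Jucys–Murphy elements: `X_1 = T_0` and `X_{i+1} = T_i X_i T_i`.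
(`AKX q d n u i` is the element `X_i`; the value at `i = 0` is junk.) -/
noncomputable def AKX {k : Type*} [Field k] (q : k) (d n : ℕ) (u : Fin d → k) :
    ℕ → ArikiKoike k q d n u
  | 0 => 1
  | 1 => AKT q d n u 0
  | (i + 2) => AKT q d n u (i + 1) * AKX q d n u (i + 1) * AKT q d n u (i + 1)

/-- The factor `(T_1 − q)·(T_0 − q·s/(q + q⁻¹))·(T_1 − q)` of `τ`, for a scalar `s ∈ k`. -/
noncomputable def AKtauFactor {k : Type*} [Field k] (q : k) (d n : ℕ) (u : Fin d → k)
    (s : k) : ArikiKoike k q d n u :=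
  (AKT q d n u 1 - algebraMap k (ArikiKoike k q d n u) q) *
    (AKT q d n u 0 - algebraMap k (ArikiKoike k q d n u) (q * s / (q + q⁻¹))) *
    (AKT q d n u 1 - algebraMap k (ArikiKoike k q d n u) q)

/-- In the Ariki–Koike algebra `H(d,n)`, the elements
`(T_1 − q)·(T_0 − q·s/(q + q⁻¹))·(T_1 − q)`, for `s` ranging over `k`, pairwise commute;
in particular the product defining `τ` is independent of the order of its factors. -/
theorem arikiKoike_tauFactor_commute {k : Type*} [Field k] (q : k) (hq : q ≠ 0)
    (hq' : q + q⁻¹ ≠ 0) (d n : ℕ) (hd : 1 ≤ d) (hn : 2 ≤ n) (u : Fin d → k)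
    (s s' : k) :
    Commute (AKtauFactor q d n u s) (AKtauFactor q d n u s') := by
  have h1n : 1 < n := hn
  set a : ArikiKoike k q d n u :=
    AKT q d n u 1 - algebraMap k (ArikiKoike k q d n u) q with ha
  set t : ArikiKoike k q d n u := AKT q d n u 0 with ht
  -- the quadratic relation for T1
  have hT1 : AKT q d n u 1 = RingQuot.mkAlgHom k (AKRel k q d n u) (ι k (⟨1, h1n⟩ : Fin n)) := by
    rw [AKT, dif_pos h1n]
  have hrel : a * (AKT q d n u 1 + algebraMap k (ArikiKoike k q d n u) q⁻¹) = 0 := by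
    have h := RingQuot.mkAlgHom_rel k
      (AKRel.quad (k := k) (q := q) (d := d) (u := u) (⟨1, h1n⟩ : Fin n) le_rfl)
    simp only [map_mul, map_sub, map_add, map_zero, AlgHom.commutes] at h
    rw [ha, hT1]
    exact h
  -- the square of a is a scalar multiple of a
  have hsq : a * a = algebraMap k (ArikiKoike k q d n u) (-(q⁻¹ + q)) * a := by
    have h2 : a = (AKT q d n u 1 + algebraMap k (ArikiKoike k q d n u) q⁻¹)
        - algebraMap k (ArikiKoike k q d n u) (q⁻¹ + q) := by
      rw [ha, map_add]; abel
    calc a * a = a * (AKT q d n u 1 + algebraMap k (ArikiKoike k q d n u) q⁻¹)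
          - a * algebraMap k (ArikiKoike k q d n u) (q⁻¹ + q) := by
            nth_rewrite 2 [h2]; rw [mul_sub]
      _ = algebraMap k (ArikiKoike k q d n u) (-(q⁻¹ + q)) * a := by
            rw [hrel, zero_sub, ← Algebra.commutes, map_neg]
            exact (neg_mul (algebraMap k (ArikiKoike k q d n u) (q⁻¹ + q)) a).symm
  -- a commutes with a * t * a
  have hcomm : Commute a (a * t * a) := by
    show a * (a * t * a) = a * t * a * a
    calc a * (a * t * a) = (a * a) * t * a := by rw [mul_assoc, mul_assoc, mul_assoc]
      _ = algebraMap k (ArikiKoike k q d n u) (-(q⁻¹ + q)) * (a * t * a) := by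
            rw [hsq, mul_assoc, mul_assoc, mul_assoc]
      _ = (a * t) * (algebraMap k (ArikiKoike k q d n u) (-(q⁻¹ + q)) * a) := by
            rw [← mul_assoc, Algebra.commutes, mul_assoc]
      _ = a * t * a * a := by rw [← hsq, ← mul_assoc]
  -- rewrite each factor
  have hF : ∀ c : k, a * (t - algebraMap k (ArikiKoike k q d n u) c) * a
      = a * t * a - algebraMap k (ArikiKoike k q d n u) c * (a * a) := by
    intro c
    have e1 : a * (t - algebraMap k (ArikiKoike k q d n u) c) * a
        = (a * t) * a - (a * algebraMap k (ArikiKoike k q d n u) c) * a := by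
      rw [mul_sub a t (algebraMap k (ArikiKoike k q d n u) c)]; exact sub_mul (a * t) (a * algebraMap k (ArikiKoike k q d n u) c) a
    have e2 : (a * algebraMap k (ArikiKoike k q d n u) c) * a
        = algebraMap k (ArikiKoike k q d n u) c * (a * a) := by
      rw [show a * algebraMap k (ArikiKoike k q d n u) c
          = algebraMap k (ArikiKoike k q d n u) c * a from (Algebra.commutes c a).symm, mul_assoc]
    rw [e1, e2]
  have hAB : Commute (a * t * a) (a * a) := hcomm.symm.mul_right hcomm.symm
  have key : ∀ c c' : k,
      Commute (a * t * a - algebraMap k (ArikiKoike k q d n u) c * (a * a))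
        (a * t * a - algebraMap k (ArikiKoike k q d n u) c' * (a * a)) := by
    intro c c'
    have h1 : Commute (a * t * a) (algebraMap k (ArikiKoike k q d n u) c' * (a * a)) :=
      (Algebra.commute_algebraMap_right c' _).mul_right hAB
    have h2 : Commute (algebraMap k (ArikiKoike k q d n u) c * (a * a)) (a * t * a) :=
      (Algebra.commute_algebraMap_left c _).mul_left hAB.symm
    have h3 : Commute (algebraMap k (ArikiKoike k q d n u) c * (a * a))
        (algebraMap k (ArikiKoike k q d n u) c' * (a * a)) :=
      ((Algebra.commute_algebraMap_left c _).mul_left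
        ((Algebra.commute_algebraMap_right c' _).mul_right (Commute.refl _)))
    exact ((Commute.refl _).sub_right h1).sub_left (h2.sub_right h3)
  have := key (q * s / (q + q⁻¹)) (q * s' / (q + q⁻¹))
  rw [← hF, ← hF] at this
  exact this
end

section
/- The two-sided ideal of the Ariki–Koike algebra H(d,n) generated by the element τ is equal to the two-sided ideal of H(d,n) generated by the element (T_1 − q)·∏_{1 ≤ i < j ≤ d}(X_1 + X_2 − (u_i + u_j)). -/
open FreeAlgebra

/-- The element `τ = ∏_{1 ≤ i < j ≤ d} [(T_1 − q)(T_0 − q(u_i + u_j)/(q + q⁻¹))(T_1 − q)]`,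
with factors taken in lexicographic order of the pairs `(i, j)`. -/
noncomputable def AKtau {k : Type*} [Field k] (q : k) (d n : ℕ) (u : Fin d → k) :
    ArikiKoike k q d n u :=
  ((List.finRange d).map (fun (i : Fin d) =>
    (((List.finRange d).map (fun (j : Fin d) =>
      if (i : ℕ) < (j : ℕ) then
        (AKT q d n u 1 - algebraMap k (ArikiKoike k q d n u) q) *
          (AKT q d n u 0 -
            algebraMap k (ArikiKoike k q d n u) (q * (u i + u j) / (q + q⁻¹))) *
          (AKT q d n u 1 - algebraMap k (ArikiKoike k q d n u) q)
      else 1)).prod))).prod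

/-- The element `∏_{1 ≤ i < j ≤ d} (X_1 + X_2 − (u_i + u_j))`, with factors taken in
lexicographic order of the pairs `(i, j)`. -/
noncomputable def AKprodJM {k : Type*} [Field k] (q : k) (d n : ℕ) (u : Fin d → k) :
    ArikiKoike k q d n u :=
  ((List.finRange d).map (fun (i : Fin d) =>
    (((List.finRange d).map (fun (j : Fin d) =>
      if (i : ℕ) < (j : ℕ) then
        AKX q d n u 1 + AKX q d n u 2 - algebraMap k (ArikiKoike k q d n u) (u i + u j)
      else 1)).prod))).prod

/-!
Write `T = T₁ - q`. The quadratic relation gives `T T₁ = -q⁻¹ T`, hence `T² = -(q + q⁻¹) T`,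
and it makes `T₁` commute with `X₁ + X₂ = T₀ + T₁ T₀ T₁`. Consequently every factor of `τ` is
`T (T₀ - r) T = -q T (X₁ + X₂ - c)` with `c = uᵢ + uⱼ` and `r = q c / (q + q⁻¹)`. As `T` is
quasi-idempotent and commutes with each `X₁ + X₂ - c`, a nonempty product of such factors (here
`d ≥ 2`) collapses to a nonzero scalar multiple of `T ∏ (X₁ + X₂ - c)`, and a unit multiple of
an element generates the same two-sided ideal.
-/

namespace List

variable {M α β : Type*} [Monoid M]

theorem prod_map_ite_one (p : α → Prop) [DecidablePred p] (f : α → M) (l : List α) :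
    (l.map fun a => if p a then f a else 1).prod = ((l.filter p).map f).prod := by
  induction l with
  | nil => rfl
  | cons a l ih => by_cases h : p a <;> simp [h, ih]

theorem prod_map_prod_map_ite_one (p : α → β → Prop) [∀ a b, Decidable (p a b)]
    (f : α → β → M) (l₁ : List α) (l₂ : List β) :
    (l₁.map fun a => (l₂.map fun b => if p a b then f a b else 1).prod).prod =
      (((l₁ ×ˢ l₂).filter fun x => p x.1 x.2).map fun x => f x.1 x.2).prod := by
  induction l₁ with
  | nil => rfl
  | cons a l₁ ih =>
    rw [product_cons, map_cons, prod_cons, ih, prod_map_ite_one, filter_append, map_append,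
      prod_append, filter_map, map_map]
    rfl

theorem prod_map_mul_cons_of_mul_self_eq_smul {k A : Type*} [CommSemiring k] [Semiring A]
    [Algebra k A] {e : A} {μ : k} (he : e * e = μ • e) (z : A) (l : List A)
    (hcomm : ∀ y ∈ z :: l, Commute e y) :
    ((z :: l).map (e * ·)).prod = μ ^ l.length • (e * (z :: l).prod) := by
  induction l generalizing z with
  | nil => simp
  | cons y l ih =>
    have hz : Commute e z := hcomm z mem_cons_self
    calc ((z :: y :: l).map (e * ·)).prod = e * z * ((y :: l).map (e * ·)).prod := rfl
      _ = μ ^ l.length • ((e * e) * (z * (y :: l).prod)) := by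
        rw [ih y fun x hx => hcomm x (mem_cons_of_mem z hx), mul_smul_comm, mul_assoc,
          hz.symm.left_comm, ← mul_assoc]
      _ = μ ^ (y :: l).length • (e * (z :: y :: l).prod) := by
        rw [he, smul_mul_assoc, smul_smul, ← pow_succ]
        rfl

end List

theorem TwoSidedIdeal.span_singleton_mul_of_isUnit {R : Type*} [Ring R] {u : R} (hu : IsUnit u)
    (x : R) : span {u * x} = span {x} := by
  obtain ⟨u, rfl⟩ := hu
  refine le_antisymm (span_le.2 ?_) (span_le.2 ?_) <;> rw [Set.singleton_subset_iff]
  · exact mul_mem_left _ _ _ (subset_span rfl)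
  · simpa using mul_mem_left _ (↑u⁻¹ : R) _ (subset_span (Set.mem_singleton (↑u * x)))

section HeckeQuadratic

variable {k A : Type*} [Field k] [Ring A] [Algebra k A] {q : k} {t : A}

theorem sub_smul_one_mul_self_of_quadratic (ht : (t - q • 1) * (t + q⁻¹ • 1) = 0) :
    (t - q • 1) * t = (-q⁻¹) • (t - q • 1) := by
  rwa [mul_add, mul_smul_comm, mul_one, add_eq_zero_iff_eq_neg, ← neg_smul] at ht

theorem sub_smul_one_mul_sub_smul_one_of_quadratic (ht : (t - q • 1) * (t + q⁻¹ • 1) = 0) :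
    (t - q • 1) * (t - q • 1) = (-(q + q⁻¹)) • (t - q • 1) := by
  rw [mul_sub _ t, sub_smul_one_mul_self_of_quadratic ht, mul_smul_comm, mul_one, ← sub_smul]
  ring_nf

theorem mul_self_eq_of_quadratic (hq : q ≠ 0) (ht : (t - q • 1) * (t + q⁻¹ • 1) = 0) :
    t * t = (q - q⁻¹) • t + 1 := by
  have h := sub_smul_one_mul_self_of_quadratic ht
  rw [sub_mul, smul_mul_assoc, one_mul, sub_eq_iff_eq_add, smul_sub, smul_smul,
    neg_mul, inv_mul_cancel₀ hq] at h
  rw [h]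
  module

theorem commute_add_mul_mul_of_quadratic (hq : q ≠ 0) (ht : (t - q • 1) * (t + q⁻¹ • 1) = 0)
    (a : A) : Commute t (a + t * a * t) := by
  have ht' := mul_self_eq_of_quadratic hq ht
  have hl : t * (t * a * t) = (q - q⁻¹) • (t * a * t) + a * t := by
    rw [← mul_assoc, ← mul_assoc, ht', add_mul, add_mul, one_mul, smul_mul_assoc, smul_mul_assoc]
  have hr : t * a * t * t = (q - q⁻¹) • (t * a * t) + t * a := by
    rw [mul_assoc _ t, ht', mul_add, mul_one, mul_smul_comm]
  show t * (a + t * a * t) = (a + t * a * t) * t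
  rw [mul_add, add_mul, hl, hr]
  abel

theorem sub_smul_one_mul_mul_sub_smul_one_of_quadratic (hq : q ≠ 0) (hq' : q + q⁻¹ ≠ 0)
    (ht : (t - q • 1) * (t + q⁻¹ • 1) = 0) (a : A) (c : k) :
    (t - q • 1) * (a - (q * c / (q + q⁻¹)) • 1) * (t - q • 1) =
      (-q) • (t - q • 1) * (a + t * a * t - c • 1) := by
  have hT := sub_smul_one_mul_self_of_quadratic ht
  have hTT := sub_smul_one_mul_sub_smul_one_of_quadratic ht
  generalize hTdef : t - q • 1 = T at hT hTT ⊢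
  have hTaT : T * a * T = T * a * t - q • (T * a) := by
    rw [← hTdef, mul_sub, mul_smul_comm, mul_one]
  have hTtat : T * (t * a * t) = (-q⁻¹) • (T * a * t) := by
    rw [← mul_assoc, ← mul_assoc, hT, smul_mul_assoc, smul_mul_assoc]
  have hr : q * c / (q + q⁻¹) * (q + q⁻¹) = q * c := div_mul_cancel₀ _ hq'
  calc T * (a - (q * c / (q + q⁻¹)) • 1) * T
      = T * a * T - (q * c / (q + q⁻¹)) • (T * T) := by
        simp only [mul_sub, sub_mul, mul_smul_comm, smul_mul_assoc, mul_one]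
    _ = T * a * t - q • (T * a) + (q * c) • T := by
        rw [hTaT, hTT, smul_smul]
        match_scalars
        · ring
        · ring
        · linear_combination hr
    _ = (-q) • T * (a + t * a * t - c • 1) := by
        simp only [mul_add, mul_sub, smul_mul_assoc, mul_smul_comm, mul_one, hTtat]
        match_scalars <;> field_simp

theorem list_prod_map_sandwich_of_quadratic (hq : q ≠ 0) (hq' : q + q⁻¹ ≠ 0)
    (ht : (t - q • 1) * (t + q⁻¹ • 1) = 0) (a : A) (c : k) (cs : List k) :
    ((c :: cs).map fun c => (t - q • 1) * (a - (q * c / (q + q⁻¹)) • 1) * (t - q • 1)).prod =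
      ((q * (q + q⁻¹)) ^ cs.length * -q) •
        ((t - q • 1) * ((c :: cs).map fun c => a + t * a * t - c • 1).prod) := by
  set e := (-q) • (t - q • 1)
  have he : e * e = (q * (q + q⁻¹)) • e := by
    rw [smul_mul_smul, sub_smul_one_mul_sub_smul_one_of_quadratic ht, smul_smul, smul_smul]
    ring_nf
  have hcomm : ∀ y ∈ (c :: cs).map fun c => a + t * a * t - c • 1, Commute e y := by
    simp only [List.mem_map]
    rintro _ ⟨c, -, rfl⟩
    have hscalar (x : k) (y : A) : Commute (x • 1 : A) y := (Commute.one_left y).smul_left x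
    exact (((commute_add_mul_mul_of_quadratic hq ht a).sub_left (hscalar q _)).sub_right
      (hscalar c _).symm).smul_left (-q)
  calc ((c :: cs).map fun c => (t - q • 1) * (a - (q * c / (q + q⁻¹)) • 1) * (t - q • 1)).prod
      = (((c :: cs).map fun c => a + t * a * t - c • 1).map (e * ·)).prod := by
        rw [List.map_map]
        exact congrArg List.prod (List.map_congr_left fun c _ =>
          sub_smul_one_mul_mul_sub_smul_one_of_quadratic hq hq' ht a c)
    _ = (q * (q + q⁻¹)) ^ cs.length •
          (e * ((c :: cs).map fun c => a + t * a * t - c • 1).prod) := by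
        rw [List.map_cons, List.prod_map_mul_cons_of_mul_self_eq_smul he _ _ hcomm, List.length_map]
    _ = _ := by rw [smul_mul_assoc, smul_smul]

end HeckeQuadratic

theorem AKT_quadratic {k : Type*} [Field k] {q : k} {d n : ℕ} {u : Fin d → k} {i : ℕ}
    (hi : 1 ≤ i) (hin : i < n) :
    (AKT q d n u i - q • 1) * (AKT q d n u i + q⁻¹ • 1) = 0 := by
  have h := RingQuot.mkAlgHom_rel k (AKRel.quad (k := k) (q := q) (d := d) (u := u) ⟨i, hin⟩ hi)
  simpa [AKT, hin, Algebra.algebraMap_eq_smul_one] using h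

/-- The two-sided ideal of the Ariki–Koike algebra `H(d,n)` generated by `τ` is equal to the
two-sided ideal generated by `(T_1 − q)·∏_{1 ≤ i < j ≤ d}(X_1 + X_2 − (u_i + u_j))`. -/
theorem arikiKoike_span_tau_eq {k : Type*} [Field k] (q : k) (hq : q ≠ 0)
    (hq' : q + q⁻¹ ≠ 0) (d n : ℕ) (hd : 2 ≤ d) (hn : 2 ≤ n) (u : Fin d → k) :
    TwoSidedIdeal.span ({AKtau q d n u} : Set (ArikiKoike k q d n u)) =
      TwoSidedIdeal.span
        ({(AKT q d n u 1 - algebraMap k (ArikiKoike k q d n u) q) * AKprodJM q d n u} :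
          Set (ArikiKoike k q d n u)) := by
  obtain ⟨c, cs, hcs⟩ : ∃ c cs, (((List.finRange d ×ˢ List.finRange d).filter
      fun x : Fin d × Fin d => (x.1 : ℕ) < x.2).map fun x => u x.1 + u x.2) = c :: cs := by
    refine List.exists_cons_of_ne_nil (List.ne_nil_of_mem (List.mem_map_of_mem
      (a := ((⟨0, by omega⟩ : Fin d), (⟨1, by omega⟩ : Fin d))) ?_))
    simp
  have hτ : AKtau q d n u = ((c :: cs).map fun c => (AKT q d n u 1 - q • 1) *
      (AKT q d n u 0 - (q * c / (q + q⁻¹)) • 1) * (AKT q d n u 1 - q • 1)).prod := by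
    rw [← hcs, AKtau, List.prod_map_prod_map_ite_one, List.map_map]
    simp only [Algebra.algebraMap_eq_smul_one]
    rfl
  have hJM : AKprodJM q d n u = ((c :: cs).map fun c =>
      AKT q d n u 0 + AKT q d n u 1 * AKT q d n u 0 * AKT q d n u 1 - c • 1).prod := by
    rw [← hcs, AKprodJM, List.prod_map_prod_map_ite_one, List.map_map]
    simp only [Algebra.algebraMap_eq_smul_one]
    rfl
  rw [hτ, hJM, list_prod_map_sandwich_of_quadratic hq hq' (AKT_quadratic le_rfl hn),
    Algebra.smul_def, TwoSidedIdeal.span_singleton_mul_of_isUnit,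
    Algebra.algebraMap_eq_smul_one q]
  exact (IsUnit.mk0 _ (mul_ne_zero (pow_ne_zero _ (mul_ne_zero hq hq')) (neg_ne_zero.2 hq))).map _
end
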